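/- arXiv:2005.09204 — 2 statements merged into one kernel-verified Lean document; each statement's English description precedes it below -/
import Mathlib

section
/- Let (T, J) be an ℕ-pair with T finite. Then there exist an integer N ≥ 1 and a set D ⊆ ℕ such that T ⊕ D = {0,1,…,N−1} and J = D ⊕ Nℕ. -/
/-!
Let `m = max T`. Since `0 ∈ T` and `m ∈ T`, whether `x` lies in `J` is decided by `J` on the
`m` integers just below `x` (decompose `x` against `0 ∈ T`) and also by `J` on the `m` integers
just above it (decompose `x + m` against `m ∈ T`). Hence the windows `J ∩ [n, n + m]` evolve by
a reversible dynamics on a finite set of states, so they are purely periodic with some period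
`N ≥ 1`; then `J = D ⊕ Nℕ` with `D = J ∩ [0, N)`, and `T ⊕ D = [0, N)`.
-/

open Pointwise

/-- Unique decompositions: every sum `a + b` with `a ∈ A`, `b ∈ B` determines `a` and `b`. -/
def UniqueSumsOn {α : Type*} [Add α] (A B : Set α) : Prop :=
  ∀ a ∈ A, ∀ b ∈ B, ∀ a' ∈ A, ∀ b' ∈ B, a + b = a' + b' → a = a' ∧ b = b'

/-- `C = A ⊕ B`: `C` is the direct sum of `A` and `B`. -/
def IsDirectSum {α : Type*} [Add α] (A B C : Set α) : Prop :=
  C = A + B ∧ UniqueSumsOn A B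

theorem Function.exists_periodic_of_finite_of_reversible {σ : Type*} [Finite σ] (s : ℕ → σ)
    (hsucc : ∀ a b, s a = s b → s (a + 1) = s (b + 1))
    (hpred : ∀ a b, s (a + 1) = s (b + 1) → s a = s b) :
    ∃ p, 0 < p ∧ Function.Periodic s p := by
  obtain ⟨a, p, hp, hap⟩ : ∃ a p, 0 < p ∧ s (a + p) = s a := by
    obtain ⟨a, b, hne, hab⟩ := Finite.exists_ne_map_eq_of_infinite s
    rcases hne.lt_or_gt with hlt | hlt
    · exact ⟨a, b - a, by omega, by rw [Nat.add_sub_cancel' hlt.le, hab]⟩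
    · exact ⟨b, a - b, by omega, by rw [Nat.add_sub_cancel' hlt.le, hab]⟩
  have hzero : s (0 + p) = s 0 := by
    induction a with
    | zero => exact hap
    | succ a ih => exact ih (hpred _ _ (by rwa [add_right_comm] at hap))
  refine ⟨p, hp, fun n => ?_⟩
  induction n with
  | zero => exact hzero
  | succ n ih => rw [add_right_comm]; exact hsucc _ _ ih

theorem isDirectSum_mul_image_of_periodic {J : Set ℕ} {p : ℕ} (hp : 0 < p)
    (hJ : Function.Periodic (· ∈ J) p) :
    IsDirectSum {d ∈ J | d < p} ((p * ·) '' Set.univ) J := by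
  constructor
  · ext x
    simp only [Set.mem_add, Set.image_univ, Set.mem_range, Set.mem_ofPred_eq]
    constructor
    · intro hx
      exact ⟨x % p, ⟨(hJ.map_mod_nat x).mpr hx, Nat.mod_lt x hp⟩, _, ⟨x / p, rfl⟩,
        Nat.mod_add_div x p⟩
    · rintro ⟨d, ⟨hd, -⟩, _, ⟨k, rfl⟩, rfl⟩
      rw [mul_comm]
      exact (hJ.nat_mul k d).mpr hd
  · rintro d ⟨-, hd⟩ _ ⟨k, -, rfl⟩ d' ⟨-, hd'⟩ _ ⟨k', -, rfl⟩ heq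
    have hdd' : d = d' := by
      simpa [Nat.add_mul_mod_self_left, Nat.mod_eq_of_lt hd, Nat.mod_eq_of_lt hd'] using
        congrArg (· % p) heq
    subst hdd'
    exact ⟨rfl, Nat.add_left_cancel heq⟩

namespace IsDirectSum

variable {T J : Set ℕ}

theorem exists_add_eq (h : IsDirectSum T J Set.univ) (n : ℕ) : ∃ t ∈ T, ∃ j ∈ J, t + j = n := by
  have hn : n ∈ T + J := h.1 ▸ Set.mem_univ n
  simpa [Set.mem_add] using hn

theorem zero_mem_left (h : IsDirectSum T J Set.univ) : 0 ∈ T := by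
  obtain ⟨t, ht, j, -, htj⟩ := h.exists_add_eq 0
  rwa [show t = 0 by omega] at ht

theorem mem_right_iff {t₀ x : ℕ} (h : IsDirectSum T J Set.univ) (ht₀ : t₀ ∈ T)
    (hle : ∀ t ∈ T, t ≤ x + t₀) : x ∈ J ↔ ∀ t ∈ T, t ≠ t₀ → x + t₀ - t ∉ J := by
  constructor
  · intro hx t ht hne hmem
    have := h.2 t₀ ht₀ x hx t ht _ hmem (by have := hle t ht; omega)
    exact hne this.1.symm
  · intro H
    obtain ⟨t, ht, j, hj, htj⟩ := h.exists_add_eq (x + t₀)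
    by_cases htt₀ : t = t₀
    · rwa [show x = j by omega]
    · exact absurd (show x + t₀ - t = j by omega ▸ hj) (H t ht htt₀)

theorem Iio_of_periodic {p : ℕ} (h : IsDirectSum T J Set.univ)
    (hJ : Function.Periodic (· ∈ J) p) : IsDirectSum T {d ∈ J | d < p} (Set.Iio p) := by
  constructor
  · ext x
    simp only [Set.mem_Iio, Set.mem_add, Set.mem_ofPred_eq]
    constructor
    · intro hx
      obtain ⟨t, ht, j, hj, htj⟩ := h.exists_add_eq x
      exact ⟨t, ht, j, ⟨hj, by omega⟩, htj⟩
    · rintro ⟨t, ht, d, ⟨hd, hdp⟩, rfl⟩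
      by_contra! hge
      -- writing `t + d - p = t' + j'` gives a second decomposition `t + d = t' + (j' + p)`
      obtain ⟨t', ht', j', hj', htj'⟩ := h.exists_add_eq (t + d - p)
      have := h.2 t ht d hd t' ht' (j' + p) ((hJ j').mpr hj') (by omega)
      omega
  · intro t ht d hd t' ht' d' hd'
    exact h.2 t ht d hd.1 t' ht' d' hd'.1

end IsDirectSum

def window (J : Set ℕ) (m n : ℕ) : Fin (m + 1) → Prop := fun i => n + i ∈ J

theorem window_eq_window_iff {J : Set ℕ} {m a b : ℕ} :
    window J m a = window J m b ↔ ∀ i ≤ m, (a + i ∈ J ↔ b + i ∈ J) := by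
  simp [window, funext_iff, Fin.forall_iff]

section Window

variable {T J : Set ℕ} {m : ℕ}

theorem window_succ_eq_window_succ (h : IsDirectSum T J Set.univ) (hm : ∀ t ∈ T, t ≤ m)
    {a b : ℕ} (hab : window J m a = window J m b) : window J m (a + 1) = window J m (b + 1) := by
  rw [window_eq_window_iff] at hab ⊢
  intro i hi
  rcases hi.lt_or_eq with hi | rfl
  · simpa only [add_assoc, add_comm 1 i] using hab (i + 1) hi
  · have hle : ∀ c, ∀ t ∈ T, t ≤ c + 1 + i + 0 := fun c t ht => by have := hm t ht; omega
    rw [h.mem_right_iff h.zero_mem_left (hle a), h.mem_right_iff h.zero_mem_left (hle b)]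
    refine forall₂_congr fun t ht => imp_congr_right fun ht0 => not_congr ?_
    have := hm t ht
    rw [show a + 1 + i + 0 - t = a + (i + 1 - t) by omega,
      show b + 1 + i + 0 - t = b + (i + 1 - t) by omega]
    exact hab _ (by omega)

theorem window_eq_window_of_succ (h : IsDirectSum T J Set.univ) (hmT : m ∈ T)
    (hm : ∀ t ∈ T, t ≤ m) {a b : ℕ} (hab : window J m (a + 1) = window J m (b + 1)) :
    window J m a = window J m b := by
  rw [window_eq_window_iff] at hab ⊢
  rintro (_ | i) hi
  · have hle : ∀ c, ∀ t ∈ T, t ≤ c + 0 + m := fun c t ht => by have := hm t ht; omega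
    rw [h.mem_right_iff hmT (hle a), h.mem_right_iff hmT (hle b)]
    refine forall₂_congr fun t ht => imp_congr_right fun htm => not_congr ?_
    have := hm t ht
    rw [show a + 0 + m - t = a + 1 + (m - 1 - t) by omega,
      show b + 0 + m - t = b + 1 + (m - 1 - t) by omega]
    exact hab _ (by omega)
  · simpa only [add_assoc, add_comm 1 i] using hab i (by omega)

end Window

theorem stmt14 (T J : Set ℕ) (h : IsDirectSum T J Set.univ) (hT : T.Finite) :
    ∃ N : ℕ, 1 ≤ N ∧ ∃ D : Set ℕ,
      IsDirectSum T D (Set.Iio N) ∧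
      IsDirectSum D ((N * ·) '' Set.univ) J := by
  obtain ⟨m, hmT, hm⟩ := Set.exists_max_image T id hT ⟨0, h.zero_mem_left⟩
  obtain ⟨p, hp, hper⟩ := Function.exists_periodic_of_finite_of_reversible (window J m)
    (fun _ _ => window_succ_eq_window_succ h hm) (fun _ _ => window_eq_window_of_succ h hmT hm)
  have hJ : Function.Periodic (· ∈ J) p := fun n => congrFun (hper n) 0
  exact ⟨p, hp, {d ∈ J | d < p}, h.Iio_of_periodic hJ,
    isDirectSum_mul_image_of_periodic hp hJ⟩
end

section
/- Let n ≥ 2 and (T, J) be a primitive ℕ^n-pair of class F₀, meaning that for each coordinate j, T ∩ ℕe_j equals {0} or ℕe_j. Then there exists an m-face Q₀ of ℕ^n with 2 ≤ m ≤ n such that the induced marginal pair (ρ(T ∩ Q₀), ρ(J ∩ Q₀)) is of pure type, i.e., contains L₀ = {x ∈ ℕ^m : some coordinate of x is 0} in one of its two members. -/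
open Pointwise

/-- `(T, J)` is (up to a permutation of coordinates) the Cartesian product of an
`ℕ^p`-pair and an `ℕ^q`-pair with `p, q ≥ 1`: there is a nonempty proper set `S`
of coordinates along which both `T` and `J` split into lower-dimensional pairs. -/
def IsProductPair {n : ℕ} (T J : Set (Fin n → ℕ)) : Prop :=
  ∃ S : Set (Fin n), S.Nonempty ∧ Sᶜ.Nonempty ∧
    ∃ (I₁ J₁ : Set (∀ _ : S, ℕ)) (I₂ J₂ : Set (∀ _ : ↥Sᶜ, ℕ)),
      IsDirectSum I₁ J₁ Set.univ ∧ IsDirectSum I₂ J₂ Set.univ ∧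
      T = {x | (fun i : S => x i.1) ∈ I₁ ∧ (fun i : ↥Sᶜ => x i.1) ∈ I₂} ∧
      J = {x | (fun i : S => x i.1) ∈ J₁ ∧ (fun i : ↥Sᶜ => x i.1) ∈ J₂}

/-!
Under F₀ every coordinate axis lies entirely in `T` or entirely in `J`: an axis meeting `T` only
in `0` lies in `J`, since the summands of a point of an axis are again on that axis.  If two
distinct axes `e_j, e_k` lie in the same member, that member contains `L₀` of the 2-face spanned
by them, which is just the union of the two axes.  For `n ≥ 3` this happens by pigeonhole.  For
`n = 2` the only other possibility is `ℕe_j ⊆ T`, `ℕe_k ⊆ J`; then uniqueness of decompositions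
forces `T = ℕe_j` and `J = ℕe_k`, a product of two `ℕ`-pairs, which primitivity excludes.
-/

/-- `ρ⁻¹(L₀) ∩ Q` for the face `Q` spanned by the coordinates in `s`. -/
def faceBoundary {ι M : Type*} [Zero M] (s : Finset ι) : Set (ι → M) :=
  {x | (∀ i ∉ s, x i = 0) ∧ ∃ i ∈ s, x i = 0}

section Axes

variable {ι M : Type*} [DecidableEq ι]

lemma eq_single_of_forall_ne [Zero M] {x : ι → M} {j : ι} (h : ∀ i ≠ j, x i = 0) :
    x = Pi.single j (x j) := by
  ext i
  rcases eq_or_ne i j with rfl | hi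
  · simp
  · simp [hi, h i hi]

lemma faceBoundary_pair_subset [Zero M] {X : Set (ι → M)} {j k : ι}
    (hj : Set.range (Pi.single j) ⊆ X) (hk : Set.range (Pi.single k) ⊆ X) :
    faceBoundary {j, k} ⊆ X := by
  rintro x ⟨hout, i, hi, hxi⟩
  have on_other_axis : ∀ {a b : ι}, x a = 0 → ({a, b} : Finset ι) = {j, k} →
      x = Pi.single b (x b) := fun hxa hab => eq_single_of_forall_ne fun l hlb =>
    (eq_or_ne l _).elim (· ▸ hxa) fun hla => hout l (by simp [← hab, hla, hlb])
  rcases Finset.mem_insert.mp hi with rfl | hi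
  · rw [on_other_axis hxi rfl]
    exact hk ⟨_, rfl⟩
  · rw [Finset.mem_singleton.mp hi] at hxi
    rw [on_other_axis hxi (Finset.pair_comm k j)]
    exact hj ⟨_, rfl⟩

lemma eq_single_of_add_eq_single [AddCommMonoid M] [Subsingleton (AddUnits M)]
    {a b : ι → M} {j : ι} {m : M} (hab : a + b = Pi.single j m) : a = Pi.single j (a j) :=
  eq_single_of_forall_ne fun i hi =>
    (add_eq_zero.mp (by simpa [hi] using congrFun hab i)).1

lemma axis_subset_right_of_axis_inter_eq_zero [AddCommMonoid M] [Subsingleton (AddUnits M)]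
    {T J : Set (ι → M)} (h : IsDirectSum T J Set.univ) {j : ι}
    (hTj : {m : M | Pi.single j m ∈ T} = {0}) : Set.range (Pi.single j) ⊆ J := by
  rintro _ ⟨m, rfl⟩
  obtain ⟨a, ha, b, hb, hab⟩ : Pi.single j m ∈ T + J := h.1 ▸ Set.mem_univ _
  have haj : a j ∈ {m : M | Pi.single j m ∈ T} := by
    rwa [Set.mem_ofPred_eq, ← eq_single_of_add_eq_single hab]
  rw [hTj, Set.mem_singleton_iff] at haj
  have ha0 : a = 0 := by rw [eq_single_of_add_eq_single hab, haj, Pi.single_zero]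
  simp only [ha0, zero_add] at hab
  exact hab ▸ hb

end Axes

section DirectSum

variable {α : Type*}

lemma IsDirectSum.symm [AddCommSemigroup α] {A B C : Set α} (h : IsDirectSum A B C) :
    IsDirectSum B A C :=
  ⟨h.1.trans (add_comm A B), fun b hb a ha b' hb' a' ha' hab =>
    (h.2 a ha b hb a' ha' b' hb' (by rwa [add_comm a, add_comm a'])).symm⟩

lemma isDirectSum_univ_zero [AddZeroClass α] : IsDirectSum (Set.univ : Set α) {0} Set.univ :=
  ⟨by simp, fun _ _ _ hb _ _ _ hb' hab => by simp_all⟩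

lemma isDirectSum_zero_univ [AddZeroClass α] : IsDirectSum ({0} : Set α) Set.univ Set.univ :=
  ⟨by simp, fun _ ha _ _ _ ha' _ _ hab => by simp_all⟩

end DirectSum

section Supported

variable {ι M : Type*} {S : Set ι}

/-- Compare the decomposition `t + 0` with the splitting of `t` along `S`. -/
lemma IsDirectSum.subset_of_supported_subset [AddZeroClass M] {T J : Set (ι → M)}
    (h : IsDirectSum T J Set.univ)
    (hT : {x | ∀ i ∈ Sᶜ, x i = 0} ⊆ T) (hJ : {x | ∀ i ∈ S, x i = 0} ⊆ J) :
    T ⊆ {x | ∀ i ∈ Sᶜ, x i = 0} := by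
  intro t ht i hi
  have hsplit := h.2 t ht 0 (hJ fun _ _ => rfl) (S.indicator t)
    (hT fun _ hl => Set.indicator_of_notMem hl t) (Sᶜ.indicator t)
    (hJ fun _ hl => Set.indicator_of_notMem (Set.notMem_compl_iff.mpr hl) t)
    (by rw [add_zero, Set.indicator_self_add_compl])
  simpa [Set.indicator_of_mem hi] using (congrFun hsplit.2 i).symm

lemma IsDirectSum.eq_supported_of_supported_subset [AddCommMonoid M] {T J : Set (ι → M)}
    (h : IsDirectSum T J Set.univ)
    (hT : {x | ∀ i ∈ Sᶜ, x i = 0} ⊆ T) (hJ : {x | ∀ i ∈ S, x i = 0} ⊆ J) :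
    T = {x | ∀ i ∈ Sᶜ, x i = 0} ∧ J = {x | ∀ i ∈ S, x i = 0} := by
  have hJ' : J ⊆ {x | ∀ i ∈ Sᶜᶜ, x i = 0} :=
    h.symm.subset_of_supported_subset (by rwa [compl_compl]) hT
  rw [compl_compl] at hJ'
  exact ⟨(h.subset_of_supported_subset hT hJ).antisymm hT, hJ'.antisymm hJ⟩

end Supported

lemma isProductPair_of_eq_supported {n : ℕ} {T J : Set (Fin n → ℕ)} {S : Set (Fin n)}
    (hS : S.Nonempty) (hSc : Sᶜ.Nonempty)
    (hT : T = {x | ∀ i ∈ Sᶜ, x i = 0}) (hJ : J = {x | ∀ i ∈ S, x i = 0}) :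
    IsProductPair T J := by
  refine ⟨S, hS, hSc, Set.univ, {0}, {0}, Set.univ, isDirectSum_univ_zero,
    isDirectSum_zero_univ, ?_, ?_⟩
  · simp [hT, funext_iff]
  · simp [hJ, funext_iff]

lemma isProductPair_of_axes_fin_two {T J : Set (Fin 2 → ℕ)} (h : IsDirectSum T J Set.univ)
    {j k : Fin 2} (hjk : j ≠ k) (hj : Set.range (Pi.single j) ⊆ T)
    (hk : Set.range (Pi.single k) ⊆ J) : IsProductPair T J := by
  have hT : {x : Fin 2 → ℕ | ∀ i ∈ ({j} : Set (Fin 2))ᶜ, x i = 0} ⊆ T := fun x hx =>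
    eq_single_of_forall_ne (j := j) hx ▸ hj ⟨_, rfl⟩
  have hJ : {x : Fin 2 → ℕ | ∀ i ∈ ({j} : Set (Fin 2)), x i = 0} ⊆ J := fun x hx =>
    eq_single_of_forall_ne (j := k) (fun i hik => hx i (Set.mem_singleton_iff.mpr (by omega))) ▸
      hk ⟨_, rfl⟩
  obtain ⟨hT', hJ'⟩ := h.eq_supported_of_supported_subset hT hJ
  exact isProductPair_of_eq_supported (Set.singleton_nonempty j) ⟨k, hjk.symm⟩ hT' hJ'

lemma exists_ne_and_or_of_forall_or {α : Type*} [Fintype α] (hα : 3 ≤ Fintype.card α)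
    {p q : α → Prop} (hpq : ∀ a, p a ∨ q a) :
    ∃ a b, a ≠ b ∧ (p a ∧ p b ∨ q a ∧ q b) := by
  classical
  obtain ⟨a, b, hab, hpab⟩ := Fintype.exists_ne_map_eq_of_card_lt (fun a => decide (p a))
    (by simp only [Fintype.card_bool]; omega)
  simp only [decide_eq_decide] at hpab
  refine ⟨a, b, hab, ?_⟩
  by_cases ha : p a
  · exact .inl ⟨ha, hpab.mp ha⟩
  · exact .inr ⟨(hpq a).resolve_left ha, (hpq b).resolve_left (hpab.not.mp ha)⟩

theorem stmt18 {n : ℕ} (hn : 2 ≤ n) (T J : Set (Fin n → ℕ))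
    (h : IsDirectSum T J Set.univ) (hprim : ¬ IsProductPair T J)
    (hF0 : ∀ j : Fin n, {k : ℕ | Pi.single j k ∈ T} = {0} ∨
      {k : ℕ | Pi.single j k ∈ T} = Set.univ) :
    ∃ s : Finset (Fin n), 2 ≤ s.card ∧
      ({x : Fin n → ℕ | (∀ i ∉ s, x i = 0) ∧ ∃ i ∈ s, x i = 0} ⊆ T ∨
       {x : Fin n → ℕ | (∀ i ∉ s, x i = 0) ∧ ∃ i ∈ s, x i = 0} ⊆ J) := by
  have haxis : ∀ j : Fin n, Set.range (Pi.single j) ⊆ T ∨ Set.range (Pi.single j) ⊆ J :=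
    fun j => (hF0 j).symm.imp (fun hT => Set.range_subset_iff.mpr (Set.eq_univ_iff_forall.mp hT))
      (axis_subset_right_of_axis_inter_eq_zero h)
  suffices ∃ j k, j ≠ k ∧ (Set.range (Pi.single j) ⊆ T ∧ Set.range (Pi.single k) ⊆ T ∨
      Set.range (Pi.single j) ⊆ J ∧ Set.range (Pi.single k) ⊆ J) by
    obtain ⟨j, k, hjk, hX⟩ := this
    exact ⟨{j, k}, (Finset.card_pair hjk).ge,
      hX.imp (fun hX => faceBoundary_pair_subset hX.1 hX.2)
        (fun hX => faceBoundary_pair_subset hX.1 hX.2)⟩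
  obtain rfl | hn3 : n = 2 ∨ 3 ≤ n := by omega
  · rcases haxis 0 with h0 | h0 <;> rcases haxis 1 with h1 | h1
    · exact ⟨0, 1, by decide, .inl ⟨h0, h1⟩⟩
    · exact (hprim (isProductPair_of_axes_fin_two h (by decide) h0 h1)).elim
    · exact (hprim (isProductPair_of_axes_fin_two h (by decide) h1 h0)).elim
    · exact ⟨0, 1, by decide, .inr ⟨h0, h1⟩⟩
  · exact exists_ne_and_or_of_forall_or (by simpa using hn3) haxis
end
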